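/- Let s = 2, P̂₂ = [[1, −2√3/5], [1, √3]], A₂ = P̂₂ X₂² P̂₂^{-1}, and let A₂ = L₂ U₂ be its Crout factorization with U₂ upper triangular with unit diagonal and L₂ lower triangular with both diagonal entries equal to 1/12. Then for every x ∈ ℝ the matrix I₂ + x² L₂ is invertible, the iteration matrix M(x²) = x² (I₂ + x² L₂)^{-1} L₂ (I₂ − U₂) has rank at most 1 with eigenvalues 0 and (x²/12)/(1 + x²/12)², and hence its spectral radius equals (x²/12)/(1 + x²/12)² ≤ 1/4, with equality exactly when x² = 12; in particular the maximum amplification factor is ρ* = 1/4. -/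

import Mathlib

open scoped Matrix

noncomputable section

/-- `X₂ = [[1/2, −ξ₁], [ξ₁, 0]]` with `ξ₁ = 1/(2√3)`. -/
def X2 : Matrix (Fin 2) (Fin 2) ℝ :=
  !![1 / 2, -(1 / (2 * Real.sqrt 3)); 1 / (2 * Real.sqrt 3), 0]

/-- `P̂₂ = [[1, −2√3/5], [1, √3]]`. -/
def Phat2 : Matrix (Fin 2) (Fin 2) ℝ :=
  !![1, -(2 * Real.sqrt 3 / 5); 1, Real.sqrt 3]

/-- `A₂ = P̂₂ X₂² P̂₂⁻¹`. -/
def A2 : Matrix (Fin 2) (Fin 2) ℝ := Phat2 * (X2 * X2) * Phat2⁻¹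

/-- The iteration matrix `M(x²) = x² (I₂ + x² L₂)⁻¹ L₂ (I₂ − U₂)`. -/
def Miter (L U : Matrix (Fin 2) (Fin 2) ℝ) (x : ℝ) : Matrix (Fin 2) (Fin 2) ℝ :=
  x ^ 2 • (((1 : Matrix (Fin 2) (Fin 2) ℝ) + x ^ 2 • L)⁻¹ * (L * (1 - U)))

lemma s3_pos : (0:ℝ) < Real.sqrt 3 := Real.sqrt_pos.2 (by norm_num)

lemma s3_sq : Real.sqrt 3 * Real.sqrt 3 = 3 := Real.mul_self_sqrt (by norm_num)

lemma inv2s3 : (1:ℝ)/(2*Real.sqrt 3) = Real.sqrt 3/6 := by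
  have h3 := s3_sq
  have h0 : Real.sqrt 3 ≠ 0 := ne_of_gt s3_pos
  field_simp
  linarith [h3]

lemma X2_eq : X2 = !![1/2, -(Real.sqrt 3/6); Real.sqrt 3/6, 0] := by
  rw [X2, inv2s3]

lemma Phat2_mul_inv : Phat2 * Phat2⁻¹ = 1 := by
  apply Matrix.mul_nonsing_inv
  have h3 := s3_sq
  simp [Phat2, Matrix.det_fin_two_of]
  intro h
  nlinarith [s3_pos]

lemma A2_eq : A2 = !![1/12, -(1/60); 5/12, 0] := by
  have h3 := s3_sq
  have key : !![(1:ℝ)/12, -(1/60); 5/12, 0] * Phat2 = Phat2 * (X2 * X2) := by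
    ext i j
    fin_cases i <;> fin_cases j <;>
      simp [Phat2, X2_eq, Matrix.mul_apply, Fin.sum_univ_two] <;>
      first
        | linear_combination (-11/180 : ℝ) * h3
        | linear_combination (11/180 : ℝ) * h3
        | linear_combination (1/18 : ℝ) * h3
        | linear_combination (-1/18 : ℝ) * h3
        | linear_combination (-(Real.sqrt 3)/90) * h3
        | linear_combination (Real.sqrt 3/90) * h3
        | linear_combination (Real.sqrt 3/36) * h3
  calc A2 = (!![(1:ℝ)/12, -(1/60); 5/12, 0] * Phat2) * Phat2⁻¹ := by
              rw [key]; rw [A2]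
    _ = !![(1:ℝ)/12, -(1/60); 5/12, 0] * (Phat2 * Phat2⁻¹) := by rw [Matrix.mul_assoc]
    _ = _ := by rw [Phat2_mul_inv, Matrix.mul_one]

set_option maxHeartbeats 1000000 in
/-- Let `A₂ = L₂ U₂` be the Crout factorization with `U₂` unit upper triangular and `L₂`
lower triangular with both diagonal entries `1/12`.  Then for every `x ∈ ℝ`:
`I₂ + x² L₂` is invertible; `M(x²) = x²(I₂ + x²L₂)⁻¹L₂(I₂ − U₂)` has rank at most `1`,
with eigenvalues `0` and `r(x) := (x²/12)/(1 + x²/12)²` (its characteristic polynomial is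
`X² − r(x)·X`); its spectral radius equals `r(x)`, i.e. `r(x)` is an eigenvalue and every
complex eigenvalue has modulus `≤ r(x)`; and `r(x) ≤ 1/4` with equality iff `x² = 12`
(so the maximum amplification factor is `ρ* = 1/4`). -/
theorem A2_iteration_spectral_radius (L U : Matrix (Fin 2) (Fin 2) ℝ)
    (hL : L 0 1 = 0) (hU : U 1 0 = 0) (hU0 : U 0 0 = 1) (hU1 : U 1 1 = 1)
    (hL0 : L 0 0 = 1 / 12) (hL1 : L 1 1 = 1 / 12) (hA : A2 = L * U) (x : ℝ) :
    IsUnit ((1 : Matrix (Fin 2) (Fin 2) ℝ) + x ^ 2 • L) ∧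
    (Miter L U x).rank ≤ 1 ∧
    (Miter L U x).charpoly =
      Polynomial.X ^ 2 -
        Polynomial.C ((x ^ 2 / 12) / (1 + x ^ 2 / 12) ^ 2) * Polynomial.X ∧
    ((x ^ 2 / 12) / (1 + x ^ 2 / 12) ^ 2 : ℝ) ∈ spectrum ℝ (Miter L U x) ∧
    (∀ z : ℂ, z ∈ spectrum ℂ ((Miter L U x).map (Complex.ofReal : ℝ → ℂ)) →
      ‖z‖ ≤ (x ^ 2 / 12) / (1 + x ^ 2 / 12) ^ 2) ∧
    (x ^ 2 / 12) / (1 + x ^ 2 / 12) ^ 2 ≤ 1 / 4 ∧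
    ((x ^ 2 / 12) / (1 + x ^ 2 / 12) ^ 2 = 1 / 4 ↔ x ^ 2 = 12) := by
  have hLU : L * U = !![1/12, -(1/60); 5/12, 0] := hA.symm.trans A2_eq
  have h10 : L 1 0 = 5/12 := by
    have e := congrFun (congrFun hLU 1) 0
    simpa [Matrix.mul_apply, Fin.sum_univ_two, hU0, hU, hL1] using e
  have h01 : U 0 1 = -(1/5) := by
    have e := congrFun (congrFun hLU 0) 1
    rw [Matrix.mul_apply, Fin.sum_univ_two, hL0, hL, hU1] at e
    simp at e
    linarith
  have hLeq : L = !![1/12, 0; 5/12, 1/12] := by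
    rw [Matrix.eta_fin_two L, hL0, hL, h10, hL1]
  have hUeq : U = !![1, -(1/5); 0, 1] := by
    rw [Matrix.eta_fin_two U, hU0, h01, hU, hU1]
  have hx2 : (0:ℝ) ≤ x ^ 2 := sq_nonneg x
  have ht : (0:ℝ) < 1 + x ^ 2 / 12 := by nlinarith
  have ht' : (1 + x ^ 2 / 12 : ℝ) ≠ 0 := ne_of_gt ht
  have hN : (1 : Matrix (Fin 2) (Fin 2) ℝ) + x ^ 2 • L =
      !![1 + x ^ 2 / 12, 0; 5 * x ^ 2 / 12, 1 + x ^ 2 / 12] := by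
    rw [hLeq]
    ext i j
    fin_cases i <;> fin_cases j <;>
      (try simp [Matrix.add_apply, Matrix.smul_apply, Matrix.one_apply]) <;>
      (try norm_num) <;> (try ring)
  have hunit : IsUnit ((1 : Matrix (Fin 2) (Fin 2) ℝ) + x ^ 2 • L) := by
    rw [hN, Matrix.isUnit_iff_isUnit_det, Matrix.det_fin_two_of]
    simp only [zero_mul, mul_zero, sub_zero]
    exact (mul_pos ht ht).ne'.isUnit
  have hNinv : ((1 : Matrix (Fin 2) (Fin 2) ℝ) + x ^ 2 • L)⁻¹ =
      !![1/(1 + x ^ 2 / 12), 0;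
         -(5 * x ^ 2)/(12 * (1 + x ^ 2 / 12)^2), 1/(1 + x ^ 2 / 12)] := by
    rw [hN]
    apply Matrix.inv_eq_right_inv
    ext i j
    fin_cases i <;> fin_cases j <;>
      simp [Matrix.mul_apply, Fin.sum_univ_two, Matrix.one_apply] <;>
      field_simp <;> ring
  have hM : Miter L U x =
      !![0, x ^ 2/(60 * (1 + x ^ 2 / 12));
         0, (x ^ 2 / 12) / (1 + x ^ 2 / 12) ^ 2] := by
    have h1U : (1 : Matrix (Fin 2) (Fin 2) ℝ) - !![1, -(1/5); 0, 1] = !![0, 1/5; 0, 0] := by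
      ext i j
      fin_cases i <;> fin_cases j <;>
        simp [Matrix.sub_apply, Matrix.one_apply]
    rw [Miter, hNinv, hLeq, hUeq, h1U]
    ext i j
    fin_cases i <;> fin_cases j <;>
      (try simp [Matrix.mul_apply, Fin.sum_univ_two, Matrix.smul_apply]) <;>
      (try field_simp) <;> (try ring) <;> (try tauto)
  refine ⟨hunit, ?_, ?_, ?_, ?_, ?_, ?_, ?_⟩
  · -- rank
    rw [hM]
    have : (!![0, x ^ 2/(60 * (1 + x ^ 2 / 12));
         0, (x ^ 2 / 12) / (1 + x ^ 2 / 12) ^ 2] : Matrix (Fin 2) (Fin 2) ℝ) =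
        (!![x ^ 2/(60 * (1 + x ^ 2 / 12)); (x ^ 2 / 12) / (1 + x ^ 2 / 12) ^ 2] :
          Matrix (Fin 2) (Fin 1) ℝ) * !![(0:ℝ), 1] := by
      ext i j
      fin_cases i <;> fin_cases j <;> simp [Matrix.mul_apply]
    rw [this]
    have hw := Matrix.rank_le_card_width
        (!![x ^ 2/(60 * (1 + x ^ 2 / 12)); (x ^ 2 / 12) / (1 + x ^ 2 / 12) ^ 2] :
          Matrix (Fin 2) (Fin 1) ℝ)
    simp only [Fintype.card_fin] at hw
    exact (Matrix.rank_mul_le_left _ _).trans hw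
  · -- charpoly
    rw [hM, Matrix.charpoly, Matrix.det_fin_two]
    simp [Matrix.charmatrix_apply_eq, Matrix.charmatrix_apply_ne]
    ring
  · -- real spectrum
    have hsub : algebraMap ℝ (Matrix (Fin 2) (Fin 2) ℝ) ((x ^ 2 / 12) / (1 + x ^ 2 / 12) ^ 2)
        - Miter L U x =
        !![(x ^ 2 / 12) / (1 + x ^ 2 / 12) ^ 2, -(x ^ 2/(60 * (1 + x ^ 2 / 12))); 0, 0] := by
      rw [hM]
      ext i j
      fin_cases i <;> fin_cases j <;>
        simp [Matrix.algebraMap_matrix_apply, Matrix.sub_apply]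
    rw [spectrum.mem_iff]
    intro h
    rw [Matrix.isUnit_iff_isUnit_det, hsub, Matrix.det_fin_two_of] at h
    simp at h
  · -- complex spectrum
    intro z hz
    have hr : (0:ℝ) ≤ (x ^ 2 / 12) / (1 + x ^ 2 / 12) ^ 2 := by positivity
    have hC : algebraMap ℂ (Matrix (Fin 2) (Fin 2) ℂ) z - (Miter L U x).map Complex.ofReal =
        !![z, -((x ^ 2/(60 * (1 + x ^ 2 / 12)) : ℝ) : ℂ);
           0, z - (((x ^ 2 / 12) / (1 + x ^ 2 / 12) ^ 2 : ℝ) : ℂ)] := by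
      rw [hM]
      ext i j
      fin_cases i <;> fin_cases j <;>
        simp [Matrix.algebraMap_matrix_apply, Matrix.sub_apply, Matrix.map_apply]
    rw [spectrum.mem_iff, Matrix.isUnit_iff_isUnit_det, hC, Matrix.det_fin_two_of] at hz
    rw [mul_zero, sub_zero, isUnit_iff_ne_zero, not_not, mul_eq_zero] at hz
    rcases hz with h | h
    · rw [h]
      simpa using hr
    · rw [sub_eq_zero] at h
      rw [h, Complex.norm_real, Real.norm_eq_abs, abs_of_nonneg hr]
  · -- bound
    rw [div_le_iff₀ (by positivity)]
    nlinarith [sq_nonneg (1 - x ^ 2 / 12)]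
  · -- equality → x² = 12
    intro h
    rw [div_eq_iff (by positivity)] at h
    nlinarith [sq_nonneg (x ^ 2 / 12 - 1)]
  · -- x² = 12 → equality
    intro h
    rw [h]
    norm_num
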